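/- Let S, Q ⊂ ℝⁿ be finite sets of m points each and g : S → Q a bijection with |p − g(p)| ≤ ε for every p ∈ S, where ε ≥ 0. Fix integers h, k ≥ 1 with m ≥ h+1 and k ≤ C(m−1, h). For j = 1, …, k let μ_j(S) be the mean over p ∈ S of the j-th smallest h-order average at p (over h-element subsets of S∖{p}), and define μ_j(Q) analogously. Then |μ_j(S) − μ_j(Q)| ≤ 2ε for every j; hence ‖μ(S) − μ(Q)‖_∞ ≤ 2ε and ‖μ(S) − μ(Q)‖_q ≤ 2ε·k^{1/q} for every q ∈ [1,∞). -/

import Mathlib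

/-!
Moving every point by at most `ε` changes every distance by at most `2ε`, so each h-order
average, a mean of distances, moves by at most `2ε` when `(p, T)` is replaced by
`(g p, g '' T)`; and `T ↦ g '' T` is a bijection between the `h`-subsets of `S ∖ {p}`
and of `Q ∖ {g p}`.
Two families matched elementwise within `δ` have order statistics within `δ` of each other:
the `j`-th smallest element is `≤ x` iff more than `j` elements are `≤ x`, and matching
turns "`≤ x`" in one family into "`≤ x + δ`" in the other. Averaging over `p` gives
`|μⱼ(S) - μⱼ(Q)| ≤ 2ε`, and the `ℓ_q` bound follows termwise.
-/

open scoped Classical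

/-- The h-order average of a point `p` together with a finite set `T` of
points: the mean `(2/(h(h+1))) Σ_{0≤i<j≤h} dist(p_i,p_j)` of all pairwise
distances among the `h+1` points `p, T` (for `T` of cardinality `h` not
containing `p`). -/
noncomputable def horderAvg {E : Type*} [PseudoMetricSpace E] (h : ℕ)
    (p : E) (T : Finset E) : ℝ :=
  2 / ((h : ℝ) * ((h : ℝ) + 1)) *
    ((∑ q ∈ T, dist p q) + (∑ q ∈ T, ∑ r ∈ T, dist q r) / 2)

/-- The `j`-th smallest h-order average at a point `p` of a finite set `S`:
the `j`-th entry of the list of the h-order averages `A(p,T)` over all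
`h`-element subsets `T` of `S∖{p}`, in increasing order with multiplicity. -/
noncomputable def ithAvg {E : Type*} [PseudoMetricSpace E] (h : ℕ)
    (S : Finset E) (p : E) (j : ℕ) : ℝ :=
  (Multiset.sort
    ((((S.erase p).powersetCard h).val).map (horderAvg h p)) (· ≤ ·)).getD (j - 1) 0

namespace List
variable {α : Type*} [LinearOrder α] {l : List α}

theorem SortedLE.getElem_le_iff_lt_countP (hl : l.SortedLE) {j : ℕ} (hj : j < l.length)
    (x : α) : l[j] ≤ x ↔ j < l.countP (· ≤ x) := by
  constructor
  · intro hjx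
    have htake : (l.take (j + 1)).countP (· ≤ x) = j + 1 := by
      rw [countP_eq_length.2, length_take, min_eq_left hj]
      intro a ha
      obtain ⟨i, hi, rfl⟩ := mem_take_iff_getElem.1 ha
      simpa using (hl.getElem_le_getElem_of_le (by omega : i ≤ j)).trans hjx
    calc j < j + 1 := j.lt_succ_self
      _ = (l.take (j + 1)).countP (· ≤ x) := htake.symm
      _ ≤ l.countP (· ≤ x) := (take_sublist _ _).countP_le
  · intro hcount
    by_contra! hxj
    have hdrop : (l.drop j).countP (· ≤ x) = 0 := by
      rw [countP_eq_zero]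
      intro a ha
      obtain ⟨i, hi, rfl⟩ := mem_drop_iff_getElem.1 ha
      simpa using hxj.trans_le (hl.getElem_le_getElem_of_le (by omega : j ≤ j + i))
    have := countP_append (l₁ := l.take j) (l₂ := l.drop j) (p := (· ≤ x))
    rw [take_append_drop, hdrop] at this
    have := (countP_le_length (p := (· ≤ x))).trans (length_take_le j l)
    omega

end List

namespace Multiset
variable {α : Type*} [LinearOrder α]

theorem sort_getD_le_iff_lt_countP (s : Multiset α) {j : ℕ} (hj : j < card s) (d x : α) :
    (sort s).getD j d ≤ x ↔ j < s.countP (· ≤ x) := by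
  have hj' : j < (sort s).length := by rwa [length_sort]
  conv_rhs => rw [← sort_eq s (· ≤ ·), coe_countP]
  rw [List.getD_eq_getElem _ _ hj']
  exact (pairwise_sort s _).sortedLE.getElem_le_iff_lt_countP hj' x

section OrderedGroup
variable {α : Type*} [AddCommGroup α] [LinearOrder α] [IsOrderedAddMonoid α] {δ : α}

theorem countP_le_countP_add_of_rel {s t : Multiset α}
    (hst : Rel (fun a b => |a - b| ≤ δ) s t) (x : α) :
    t.countP (· ≤ x) ≤ s.countP (· ≤ x + δ) := by
  induction hst with
  | zero => simp
  | @cons a b s t hab _ ih =>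
    have : b ≤ x → a ≤ x + δ := fun hb =>
      (sub_le_iff_le_add'.1 (le_of_abs_le hab)).trans (add_le_add_left hb δ)
    simp only [countP_cons]
    split_ifs <;> grind

theorem sort_getD_le_add_of_rel {s t : Multiset α} (hst : Rel (fun a b => |a - b| ≤ δ) s t)
    {j : ℕ} (hj : j < card s) (d : α) : (sort s).getD j d ≤ (sort t).getD j d + δ := by
  have hjt : j < card t := card_eq_card_of_rel hst ▸ hj
  rw [sort_getD_le_iff_lt_countP s hj]
  exact ((sort_getD_le_iff_lt_countP t hjt d _).1 le_rfl).trans_le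
    (countP_le_countP_add_of_rel hst _)

theorem abs_sort_getD_sub_le_of_rel (hδ : 0 ≤ δ) {s t : Multiset α}
    (hst : Rel (fun a b => |a - b| ≤ δ) s t) (j : ℕ) (d : α) :
    |(sort s).getD j d - (sort t).getD j d| ≤ δ := by
  by_cases hj : j < card s
  · have hts : Rel (fun a b => |a - b| ≤ δ) t s :=
      rel_flip.1 (hst.mono fun a _ b _ hab => show |b - a| ≤ δ by rwa [abs_sub_comm])
    rw [abs_sub_le_iff, sub_le_iff_le_add', sub_le_iff_le_add']
    exact ⟨sort_getD_le_add_of_rel hst hj d,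
      sort_getD_le_add_of_rel hts (card_eq_card_of_rel hst ▸ hj) d⟩
  · have hjt : ¬ j < card t := card_eq_card_of_rel hst ▸ hj
    rw [List.getD_eq_default _ _ (by rw [length_sort]; exact not_lt.1 hj),
      List.getD_eq_default _ _ (by rw [length_sort]; exact not_lt.1 hjt), sub_self, abs_zero]
    exact hδ

end OrderedGroup
end Multiset

open Finset

namespace Finset
variable {α β : Type*} [DecidableEq β] {f : α → β} {s : Finset α}

theorem powersetCard_image_of_injOn (hf : Set.InjOn f s) (n : ℕ) :
    (s.image f).powersetCard n = (s.powersetCard n).image (·.image f) := by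
  ext T
  simp only [mem_powersetCard, mem_image, subset_image_iff]
  constructor
  · rintro ⟨⟨U, hU, rfl⟩, hcard⟩
    exact ⟨U, ⟨hU, by rwa [card_image_of_injOn (hf.mono hU)] at hcard⟩, rfl⟩
  · rintro ⟨U, ⟨hU, rfl⟩, rfl⟩
    exact ⟨⟨U, hU, rfl⟩, card_image_of_injOn (hf.mono hU)⟩

theorem val_powersetCard_image_of_injOn (hf : Set.InjOn f s) (n : ℕ) :
    ((s.image f).powersetCard n).val = (s.powersetCard n).val.map (·.image f) := by
  rw [powersetCard_image_of_injOn hf, image_val_of_injOn]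
  exact (image_injOn_powerset_of_injOn hf).mono fun U hU =>
    mem_powerset.2 (mem_powersetCard.1 hU).1

theorem image_erase_of_injOn [DecidableEq α] (hf : Set.InjOn f s) {a : α} (ha : a ∈ s) :
    (s.erase a).image f = (s.image f).erase (f a) := by
  ext b
  simp only [mem_image, mem_erase]
  constructor
  · rintro ⟨x, ⟨hxa, hx⟩, rfl⟩
    exact ⟨fun h => hxa (hf hx ha h), x, hx, rfl⟩
  · rintro ⟨hb, x, hx, rfl⟩
    exact ⟨x, ⟨by rintro rfl; exact hb rfl, hx⟩, rfl⟩

end Finset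

section Metric
variable {E : Type*} [PseudoMetricSpace E] {ε : ℝ} {g : E → E} {T : Finset E}

theorem abs_dist_sub_dist_le (a b a' b' : E) :
    |dist a b - dist a' b'| ≤ dist a a' + dist b b' := by
  simpa only [Real.dist_eq] using dist_dist_dist_le a b a' b'

theorem abs_sum_dist_sub_sum_dist_le {p p' : E} (hp : dist p p' ≤ ε)
    (hg : ∀ q ∈ T, dist q (g q) ≤ ε) :
    |∑ q ∈ T, dist p q - ∑ q ∈ T, dist p' (g q)| ≤ 2 * ε * #T := by
  rw [← sum_sub_distrib]
  refine (abs_sum_le_sum_abs _ _).trans ?_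
  calc ∑ q ∈ T, |dist p q - dist p' (g q)| ≤ #T • (2 * ε) := by
        refine sum_le_card_nsmul _ _ _ fun q hq => ?_
        linarith [abs_dist_sub_dist_le p q p' (g q), hg q hq]
    _ = 2 * ε * #T := by rw [nsmul_eq_mul, mul_comm]

theorem abs_sum_sum_dist_sub_sum_sum_dist_le (hg : ∀ q ∈ T, dist q (g q) ≤ ε) :
    |∑ q ∈ T, ∑ r ∈ T, dist q r - ∑ q ∈ T, ∑ r ∈ T, dist (g q) (g r)|
      ≤ 2 * ε * (#T * (#T - 1)) := by
  rw [← sum_sub_distrib]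
  refine (abs_sum_le_sum_abs _ _).trans ?_
  calc ∑ q ∈ T, |∑ r ∈ T, dist q r - ∑ r ∈ T, dist (g q) (g r)|
      ≤ #T • (2 * ε * (#T - 1)) := by
        refine sum_le_card_nsmul _ _ _ fun q hq => ?_
        -- the diagonal term vanishes on both sides, leaving `#T - 1` terms
        rw [← sum_sub_distrib,
          ← sum_erase T (f := fun r => dist q r - dist (g q) (g r)) (a := q) (by simp)]
        refine (abs_sum_le_sum_abs _ _).trans ?_
        calc ∑ r ∈ T.erase q, |dist q r - dist (g q) (g r)| ≤ #(T.erase q) • (2 * ε) := by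
              refine sum_le_card_nsmul _ _ _ fun r hr => ?_
              linarith [abs_dist_sub_dist_le q r (g q) (g r), hg q hq,
                hg r (mem_of_mem_erase hr)]
          _ = 2 * ε * (#T - 1) := by
              rw [card_erase_of_mem hq, nsmul_eq_mul, Nat.cast_pred (card_pos.2 ⟨q, hq⟩),
                mul_comm]
    _ = 2 * ε * (#T * (#T - 1)) := by rw [nsmul_eq_mul]; ring

theorem abs_horderAvg_sub_horderAvg_image_le {h : ℕ} {p p' : E} (hp : dist p p' ≤ ε)
    (hT : #T = h) (hinj : Set.InjOn g T) (hg : ∀ q ∈ T, dist q (g q) ≤ ε) :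
    |horderAvg h p T - horderAvg h p' (T.image g)| ≤ 2 * ε := by
  have hε : 0 ≤ ε := dist_nonneg.trans hp
  have hcenter := abs_sum_dist_sub_sum_dist_le hp hg
  have hpairs := abs_sum_sum_dist_sub_sum_sum_dist_le hg
  rw [hT] at hcenter hpairs
  simp only [horderAvg, sum_image hinj]
  rw [← mul_sub, abs_mul, abs_of_nonneg (by positivity)]
  set A := ∑ q ∈ T, dist p q
  set A' := ∑ q ∈ T, dist p' (g q)
  set B := ∑ q ∈ T, ∑ r ∈ T, dist q r
  set B' := ∑ q ∈ T, ∑ r ∈ T, dist (g q) (g r)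
  have hsum : |A + B / 2 - (A' + B' / 2)| ≤ ε * (h * (h + 1)) :=
    calc |A + B / 2 - (A' + B' / 2)| = |(A - A') + (B - B') / 2| := by ring_nf
      _ ≤ |A - A'| + |B - B'| / 2 := by
          rw [← abs_two, ← abs_div, abs_two]; exact abs_add_le _ _
      _ ≤ 2 * ε * h + 2 * ε * (h * (h - 1)) / 2 := by gcongr
      _ = ε * (h * (h + 1)) := by ring
  calc 2 / (h * (h + 1)) * |A + B / 2 - (A' + B' / 2)|
      ≤ 2 / (h * (h + 1)) * (ε * (h * (h + 1))) := by gcongr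
    _ = 2 * ε * ((h * (h + 1)) / (h * (h + 1))) := by ring
    _ ≤ 2 * ε := mul_le_of_le_one_right (by positivity) (div_self_le_one _)

theorem abs_ithAvg_sub_ithAvg_le_of_bijOn (h : ℕ) {S Q : Finset E} (hg : Set.BijOn g S Q)
    (hclose : ∀ q ∈ S, dist q (g q) ≤ ε) {p : E} (hp : p ∈ S) (j : ℕ) :
    |ithAvg h S p j - ithAvg h Q (g p) j| ≤ 2 * ε := by
  have hε : 0 ≤ ε := dist_nonneg.trans (hclose p hp)
  obtain rfl : Q = S.image g := by rw [← coe_inj, coe_image, hg.image_eq]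
  refine Multiset.abs_sort_getD_sub_le_of_rel (by positivity) ?_ _ _
  rw [← image_erase_of_injOn hg.injOn hp,
    val_powersetCard_image_of_injOn (hg.injOn.mono (erase_subset p S)), Multiset.map_map,
    Multiset.rel_map]
  refine Multiset.rel_refl_of_refl_on fun T hT => ?_
  obtain ⟨hTS, hTcard⟩ := mem_powersetCard.1 hT
  have hTS' : T ⊆ S := hTS.trans (erase_subset p S)
  exact abs_horderAvg_sub_horderAvg_image_le (hclose p hp) hTcard (hg.injOn.mono hTS')
    fun q hq => hclose q (hTS' hq)

end Metric

theorem abs_sum_div_card_le {ι : Type*} {s : Finset ι} {f : ι → ℝ} {c : ℝ} (hc : 0 ≤ c)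
    (hf : ∀ i ∈ s, |f i| ≤ c) : |(∑ i ∈ s, f i) / #s| ≤ c := by
  rw [abs_div, Nat.abs_cast]
  refine div_le_of_le_mul₀ (Nat.cast_nonneg _) hc ?_
  calc |∑ i ∈ s, f i| ≤ ∑ i ∈ s, |f i| := abs_sum_le_sum_abs _ _
    _ ≤ #s • c := sum_le_card_nsmul _ _ _ hf
    _ = c * #s := by rw [nsmul_eq_mul, mul_comm]

theorem rpow_sum_abs_rpow_le_mul_card_rpow {ι : Type*} [Fintype ι] {f : ι → ℝ} {c q : ℝ}
    (hq : 0 < q) (hc : 0 ≤ c) (hf : ∀ i, |f i| ≤ c) :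
    (∑ i, |f i| ^ q) ^ (1 / q) ≤ c * (Fintype.card ι : ℝ) ^ (1 / q) := by
  have hsum : ∑ i, |f i| ^ q ≤ Fintype.card ι * c ^ q := by
    simpa using sum_le_sum fun i (_ : i ∈ univ) => Real.rpow_le_rpow (abs_nonneg _) (hf i) hq.le
  calc (∑ i, |f i| ^ q) ^ (1 / q) ≤ (Fintype.card ι * c ^ q) ^ (1 / q) := by
        gcongr
    _ = c * (Fintype.card ι : ℝ) ^ (1 / q) := by
        rw [Real.mul_rpow (by positivity) (by positivity), ← Real.rpow_mul hc,
          mul_one_div_cancel hq.ne', Real.rpow_one, mul_comm]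

theorem stmt_12_general (n h k m : ℕ) (ε : ℝ) (hε : 0 ≤ ε)
    (S Q : Finset (EuclideanSpace ℝ (Fin n))) (hScard : S.card = m)
    (g : EuclideanSpace ℝ (Fin n) → EuclideanSpace ℝ (Fin n))
    (hg : Set.BijOn g ↑S ↑Q) (hclose : ∀ p ∈ S, dist p (g p) ≤ ε)
    (μS μQ : Fin k → ℝ)
    (hμS : ∀ j : Fin k, μS j = (∑ p ∈ S, ithAvg h S p (j.1 + 1)) / (m : ℝ))
    (hμQ : ∀ j : Fin k, μQ j = (∑ p ∈ Q, ithAvg h Q p (j.1 + 1)) / (m : ℝ)) :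
    (∀ j : Fin k, |μS j - μQ j| ≤ 2 * ε) ∧
    (∀ q : ℝ, 1 ≤ q →
      (∑ j : Fin k, |μS j - μQ j| ^ q) ^ (1 / q) ≤ 2 * ε * (k : ℝ) ^ (1 / q)) := by
  have hμ (j : Fin k) : |μS j - μQ j| ≤ 2 * ε := by
    rw [hμS, hμQ, ← sum_nbij g hg.mapsTo hg.injOn hg.surjOn fun _ _ => rfl, ← sub_div,
      ← sum_sub_distrib, ← hScard]
    exact abs_sum_div_card_le (by positivity) fun p hp =>
      abs_ithAvg_sub_ithAvg_le_of_bijOn h hg hclose hp _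
  refine ⟨hμ, fun q hq => ?_⟩
  have := rpow_sum_abs_rpow_le_mul_card_rpow (by linarith) (by positivity) hμ
  rwa [Fintype.card_fin] at this

/-- Let `g : S → Q` be a bijection between `m`-point subsets of
`ℝⁿ` moving every point by at most `ε`, `h, k ≥ 1` with `m ≥ h+1` and
`k ≤ C(m−1,h)`. For `j = 1,…,k` let `μⱼ(S)` be the mean over `p ∈ S` of the
`j`-th smallest h-order average at `p` and similarly for `Q`. Then
`|μⱼ(S) − μⱼ(Q)| ≤ 2ε` for every `j` (hence `‖μ(S) − μ(Q)‖∞ ≤ 2ε`), and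
`‖μ(S) − μ(Q)‖_q ≤ 2ε·k^(1/q)` for every `q ∈ [1,∞)`. -/
theorem stmt_12 (n h k m : ℕ) (hn : 1 ≤ n) (hh : 1 ≤ h) (hk : 1 ≤ k)
    (hm : h + 1 ≤ m) (hkC : k ≤ (m - 1).choose h) (ε : ℝ) (hε : 0 ≤ ε)
    (S Q : Finset (EuclideanSpace ℝ (Fin n))) (hScard : S.card = m) (hQcard : Q.card = m)
    (g : EuclideanSpace ℝ (Fin n) → EuclideanSpace ℝ (Fin n))
    (hg : Set.BijOn g ↑S ↑Q) (hclose : ∀ p ∈ S, dist p (g p) ≤ ε)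
    (μS μQ : Fin k → ℝ)
    (hμS : ∀ j : Fin k, μS j = (∑ p ∈ S, ithAvg h S p (j.1 + 1)) / (m : ℝ))
    (hμQ : ∀ j : Fin k, μQ j = (∑ p ∈ Q, ithAvg h Q p (j.1 + 1)) / (m : ℝ)) :
    (∀ j : Fin k, |μS j - μQ j| ≤ 2 * ε) ∧
    (∀ q : ℝ, 1 ≤ q →
      (∑ j : Fin k, |μS j - μQ j| ^ q) ^ (1 / q) ≤ 2 * ε * (k : ℝ) ^ (1 / q)) :=
  stmt_12_general n h k m ε hε S Q hScard g hg hclose μS μQ hμS hμQ
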